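/- Let G be a finite graph and for each edge e let A(e) be a nonnegative 2×2 matrix with det A(e) ≥ 0. Define f_e(1) = a₁₁(e)a₂₂(e) and f_e(−1) = a₁₂(e)a₂₁(e). Then for any sign assignment s ∈ {−1,1}^{E(G)}, Σ_{σ ∈ {−1,1}^{V(G)}} Π_{(u,v)∈E(G)} f_e(s_{uv} σ_u σ_v) ≤ Σ_{σ ∈ {−1,1}^{V(G)}} Π_{(u,v)∈E(G)} f_e(σ_u σ_v). -/

import Mathlib

/-!
Write `f_e(b) = α_e + β_e·b` with `α_e = (f_e(1) + f_e(−1))/2 ≥ 0` and `β_e = det A(e)/2 ≥ 0`.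
Expanding the product over the edges, each side becomes a sum over edge sets `S` of
`∏_{e ∈ S} β_e s_e · ∏_{e ∉ S} α_e · Σ_σ ∏_{uv ∈ S} σ_u σ_v`, with `s ≡ 1` on the right.
The character sum `Σ_σ ∏_{uv ∈ S} σ_u σ_v = ∏_v Σ_{σ_v} σ_v^{deg_S v}` is nonnegative, and
`∏_{e ∈ S} s_e ≤ 1`, so the inequality holds term by term.
-/

open scoped Classical

/-- The edge function `f_e : {−1,1} → ℝ` associated to the 2×2 matrix `a e`,
with the sign `+1` encoded by `true` and `−1` by `false`:
`f_e(+1) = a₁₁(e)a₂₂(e)` and `f_e(−1) = a₁₂(e)a₂₁(e)`. -/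
def fe {V : Type} (a : Sym2 V → Matrix (Fin 2) (Fin 2) ℝ) (e : Sym2 V) (b : Bool) : ℝ :=
  if b then a e 0 0 * a e 1 1 else a e 0 1 * a e 1 0

/-- The sign `σ_u σ_v ∈ {−1,1}` of an edge, encoded as a Bool (`true` = `+1`):
it is `+1` exactly when the endpoint signs agree. -/
noncomputable def edgeSign {V : Type} (σ : V → Bool) (e : Sym2 V) : Bool :=
  σ (Quot.out e).1 == σ (Quot.out e).2

open Finset

def boolSign (b : Bool) : ℝ := if b then 1 else -1

@[simp] lemma boolSign_true : boolSign true = 1 := rfl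

lemma boolSign_beq (x y : Bool) : boolSign (x == y) = boolSign x * boolSign y := by
  cases x <;> cases y <;> norm_num [boolSign]

lemma abs_boolSign (b : Bool) : |boolSign b| = 1 := by
  cases b <;> simp [boolSign]

lemma eq_add_mul_boolSign (f : Bool → ℝ) (b : Bool) :
    f b = (f true + f false) / 2 + (f true - f false) / 2 * boolSign b := by
  cases b <;> simp only [boolSign, Bool.false_eq_true, if_true, if_false] <;> ring

lemma sum_boolSign_pow_nonneg (n : ℕ) : 0 ≤ ∑ b : Bool, boolSign b ^ n := by
  have h : -1 ≤ (-1 : ℝ) ^ n := by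
    simpa using neg_abs_le ((-1 : ℝ) ^ n)
  simp only [Fintype.sum_bool, boolSign, if_true, one_pow, Bool.false_eq_true, if_false]
  linarith

lemma Finset.prod_comp_eq_prod_pow_card {ι κ M : Type*} [CommMonoid M] [Fintype κ]
    [DecidableEq κ] (s : Finset ι) (g : ι → κ) (x : κ → M) :
    ∏ i ∈ s, x (g i) = ∏ k, x k ^ #{i ∈ s | g i = k} := by
  rw [← prod_fiberwise' s g x]
  simp only [prod_const]

lemma sum_prod_boolSign_pow_nonneg {V : Type*} [Fintype V] [DecidableEq V] (d : V → ℕ) :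
    0 ≤ ∑ σ : V → Bool, ∏ v, boolSign (σ v) ^ d v := by
  rw [← Fintype.prod_sum fun v b ↦ boolSign b ^ d v]
  exact prod_nonneg fun v _ ↦ sum_boolSign_pow_nonneg (d v)

lemma sum_prod_boolSign_beq_nonneg {ι V : Type*} [Fintype V] [DecidableEq V]
    (S : Finset ι) (g h : ι → V) :
    0 ≤ ∑ σ : V → Bool, ∏ i ∈ S, boolSign (σ (g i) == σ (h i)) := by
  have hdeg : ∀ σ : V → Bool, ∏ i ∈ S, boolSign (σ (g i) == σ (h i))
      = ∏ v, boolSign (σ v) ^ (#{i ∈ S | g i = v} + #{i ∈ S | h i = v}) := fun σ ↦ by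
    simp only [boolSign_beq, prod_mul_distrib, pow_add]
    rw [prod_comp_eq_prod_pow_card S g (fun v ↦ boolSign (σ v)),
      prod_comp_eq_prod_pow_card S h (fun v ↦ boolSign (σ v))]
  simp only [hdeg]
  exact sum_prod_boolSign_pow_nonneg _

lemma Finset.sum_prod_mul_add {ι X R : Type*} [CommSemiring R] [Fintype X] (E : Finset ι)
    (γ α : ι → R) (φ : X → ι → R) :
    ∑ x, ∏ i ∈ E, (γ i * φ x i + α i)
      = ∑ S ∈ E.powerset, (∏ i ∈ S, γ i) * (∏ i ∈ E \ S, α i) * ∑ x, ∏ i ∈ S, φ x i := by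
  simp_rw [prod_add, prod_mul_distrib]
  rw [sum_comm]
  refine sum_congr rfl fun S _ ↦ ?_
  rw [mul_sum]
  exact sum_congr rfl fun x _ ↦ by ring

lemma prod_mul_boolSign_le_prod {ι : Type*} (S : Finset ι) (β : ι → ℝ)
    (hβ : ∀ i ∈ S, 0 ≤ β i) (s : ι → Bool) :
    ∏ i ∈ S, β i * boolSign (s i) ≤ ∏ i ∈ S, β i :=
  calc ∏ i ∈ S, β i * boolSign (s i)
      ≤ |∏ i ∈ S, β i * boolSign (s i)| := le_abs_self _
    _ = ∏ i ∈ S, β i := by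
      rw [abs_prod]
      exact prod_congr rfl fun i hi ↦ by rw [abs_mul, abs_boolSign, mul_one, abs_of_nonneg (hβ i hi)]

/-- The theorem for a multigraph with edge set `E` and endpoint maps `g`, `h`. -/
theorem sum_prod_signed_le_sum_prod {ι V : Type*} [Fintype V] [DecidableEq V]
    (E : Finset ι) (g h : ι → V) (f : ι → Bool → ℝ)
    (hf₀ : ∀ i ∈ E, 0 ≤ f i false) (hf : ∀ i ∈ E, f i false ≤ f i true) (s : ι → Bool) :
    ∑ σ : V → Bool, ∏ i ∈ E, f i (s i == (σ (g i) == σ (h i)))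
      ≤ ∑ σ : V → Bool, ∏ i ∈ E, f i (σ (g i) == σ (h i)) := by
  set α : ι → ℝ := fun i ↦ (f i true + f i false) / 2
  set β : ι → ℝ := fun i ↦ (f i true - f i false) / 2
  have expand : ∀ t : ι → Bool,
      ∑ σ : V → Bool, ∏ i ∈ E, f i (t i == (σ (g i) == σ (h i)))
        = ∑ S ∈ E.powerset, (∏ i ∈ S, β i * boolSign (t i)) * (∏ i ∈ E \ S, α i)
            * ∑ σ : V → Bool, ∏ i ∈ S, boolSign (σ (g i) == σ (h i)) := by
    intro t
    rw [← sum_prod_mul_add]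
    refine sum_congr rfl fun σ _ ↦ prod_congr rfl fun i _ ↦ ?_
    rw [eq_add_mul_boolSign (f i), boolSign_beq]
    ring
  have hRHS := expand fun _ ↦ true
  simp only [Bool.true_beq, boolSign_true, mul_one] at hRHS
  rw [expand s, hRHS]
  refine sum_le_sum fun S hS ↦ ?_
  have hSE : S ⊆ E := mem_powerset.mp hS
  have hα : 0 ≤ ∏ i ∈ E \ S, α i :=
    prod_nonneg fun i hi ↦ by
      have := hf₀ i (mem_sdiff.mp hi).1
      have := hf i (mem_sdiff.mp hi).1
      simp only [α]
      linarith
  have hβ : ∀ i ∈ S, 0 ≤ β i := fun i hi ↦ by have := hf i (hSE hi); simp only [β]; linarith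
  exact mul_le_mul_of_nonneg_right
    (mul_le_mul_of_nonneg_right (prod_mul_boolSign_le_prod S β hβ s) hα)
    (sum_prod_boolSign_beq_nonneg S g h)

theorem det_nonneg_signed_sum_le {V : Type} [Fintype V] (G : SimpleGraph V)
    (a : Sym2 V → Matrix (Fin 2) (Fin 2) ℝ)
    (hnn : ∀ e ∈ G.edgeFinset, ∀ i j, 0 ≤ a e i j)
    (hdet : ∀ e ∈ G.edgeFinset, 0 ≤ a e 0 0 * a e 1 1 - a e 0 1 * a e 1 0)
    (s : Sym2 V → Bool) :
    ∑ σ : V → Bool, ∏ e ∈ G.edgeFinset, fe a e (s e == edgeSign σ e)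
      ≤ ∑ σ : V → Bool, ∏ e ∈ G.edgeFinset, fe a e (edgeSign σ e) :=
  sum_prod_signed_le_sum_prod G.edgeFinset (fun e ↦ e.out.1) (fun e ↦ e.out.2) (fe a)
    (fun e he ↦ mul_nonneg (hnn e he 0 1) (hnn e he 1 0))
    (fun e he ↦ sub_nonneg.mp (hdet e he)) s
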